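/- Let (M, g, J) be a Kähler manifold and h a symmetric J-anticommuting (1,1)-tensor field. Then the full type decomposition of the Frölicher–Nijenhuis bracket is [h,h]^FN = [h,h]^c + h∘∂̄h + (d⁺h² - h♯∂̄h), where [h,h]^c ∈ λ²₋(M,TM), h∘∂̄h ∈ λ²₊(M,TM), and d⁺h² - h♯∂̄h ∈ Λ^{1,1}(M,TM) (i.e. invariant under (X,Y) ↦ (JX,JY)). -/
import Mathlib


open scoped RealInnerProductSpace

def dF {V : Type*} [AddCommGroup V] [Module ℝ V]
    (Dh : V → (V →ₗ[ℝ] V)) (X Y : V) : V := Dh X Y - Dh Y X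

/-- ∂̄h := (1/2)(dh - dh(J·, J·)). -/
noncomputable def delB {V : Type*} [AddCommGroup V] [Module ℝ V]
    (J : V →ₗ[ℝ] V) (Dh : V → (V →ₗ[ℝ] V)) (X Y : V) : V :=
  (2:ℝ)⁻¹ • (dF Dh X Y - dF Dh (J X) (J Y))

/-- (h ♯ α)(X,Y) = α(hX,Y) + α(X,hY). -/
def sharp {V : Type*} [AddCommGroup V] [Module ℝ V]
    (h : V →ₗ[ℝ] V) (α : V → V → V) (X Y : V) : V := α (h X) Y + α X (h Y)

/-- The Frölicher–Nijenhuis bracket from the pointwise data `Dk X = ∇_X k`. -/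
def FNb {V : Type*} [AddCommGroup V] [Module ℝ V]
    (k : V →ₗ[ℝ] V) (Dk : V → (V →ₗ[ℝ] V)) (X Y : V) : V :=
  -(Dk (k X) Y) + Dk (k Y) X + k (dF Dk X Y)

/-- The Kodaira–Spencer bracket [h,h]^c = (1/2)([h,h]^FN - [Jh,Jh]^FN). -/
noncomputable def KSb {V : Type*} [AddCommGroup V] [Module ℝ V]
    (J h : V →ₗ[ℝ] V) (Dh : V → (V →ₗ[ℝ] V)) (X Y : V) : V :=
  (2:ℝ)⁻¹ • (FNb h Dh X Y - FNb (J ∘ₗ h) (fun Z => J ∘ₗ Dh Z) X Y)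

/-- d⁺h² := (1/2)(dh² + dh²(J·,J·)) where `Dh2 X = ∇_X(h²)`. -/
noncomputable def dPlus {V : Type*} [AddCommGroup V] [Module ℝ V]
    (J : V →ₗ[ℝ] V) (Dh2 : V → (V →ₗ[ℝ] V)) (X Y : V) : V :=
  (2:ℝ)⁻¹ • (dF Dh2 X Y + dF Dh2 (J X) (J Y))

/-- full type decomposition
[h,h]^FN = [h,h]^c + h∘∂̄h + (d⁺h² - h♯∂̄h), with [h,h]^c ∈ λ²₋, h∘∂̄h ∈ λ²₊ and
d⁺h² - h♯∂̄h of type (1,1). -/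
theorem stmt13 {V : Type*} [NormedAddCommGroup V] [InnerProductSpace ℝ V]
    (J h : V →ₗ[ℝ] V) (Dh Dh2 : V → (V →ₗ[ℝ] V))
    (hJ2 : ∀ x : V, J (J x) = -x)
    (hJorth : ∀ x y : V, ⟪J x, J y⟫ = ⟪x, y⟫)
    (hsym : ∀ x y : V, ⟪h x, y⟫ = ⟪x, h y⟫)
    (hanti : h ∘ₗ J = -(J ∘ₗ h))
    (hDadd : ∀ X Y : V, Dh (X + Y) = Dh X + Dh Y)
    (hDsmul : ∀ (c : ℝ) (X : V), Dh (c • X) = c • Dh X)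
    (hDanti : ∀ X : V, Dh X ∘ₗ J = -(J ∘ₗ Dh X))
    (hLeib : ∀ X : V, Dh2 X = Dh X ∘ₗ h + h ∘ₗ Dh X) :
    (∀ X Y : V,
      FNb h Dh X Y
        = KSb J h Dh X Y + h (delB J Dh X Y)
          + (dPlus J Dh2 X Y - sharp h (delB J Dh) X Y)) ∧
    (∀ X Y : V, KSb J h Dh (J X) (J Y) = -(KSb J h Dh X Y)) ∧
    (∀ X Y : V, KSb J h Dh X (J Y) = -(J (KSb J h Dh X Y))) ∧
    (∀ X Y : V, h (delB J Dh (J X) (J Y)) = -(h (delB J Dh X Y))) ∧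
    (∀ X Y : V, h (delB J Dh X (J Y)) = J (h (delB J Dh X Y))) ∧
    (∀ X Y : V,
      dPlus J Dh2 (J X) (J Y) - sharp h (delB J Dh) (J X) (J Y)
        = dPlus J Dh2 X Y - sharp h (delB J Dh) X Y) := by
  have hhJ : ∀ x : V, h (J x) = -(J (h x)) := by
    intro x; have := LinearMap.congr_fun hanti x; simpa using this
  have hDJ : ∀ X y : V, Dh X (J y) = -(J (Dh X y)) := by
    intro X y; have := LinearMap.congr_fun (hDanti X) y; simpa using this
  have hDneg : ∀ X : V, Dh (-X) = -(Dh X) := by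
    intro X
    have := hDsmul (-1 : ℝ) X
    simpa using this
  refine ⟨?_, ?_, ?_, ?_, ?_, ?_⟩ <;> intro X Y <;>
    simp only [FNb, KSb, delB, dF, dPlus, sharp, hLeib, LinearMap.coe_comp,
      Function.comp_apply, LinearMap.add_apply, LinearMap.neg_apply,
      LinearMap.smul_apply, hhJ, hDJ, hJ2, hDneg, map_add, map_sub, map_neg,
      map_smul, smul_add, smul_sub, smul_neg, neg_neg, neg_add, neg_sub] <;>
    module
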